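/- Let A be a torsion-free abelian group such that for any two nonzero elements a₁, a₂ ∈ A, either τ(a₁) ≤ τ(a₂), or τ(a₂) ≤ τ(a₁), or π(τ(a₁)) ∩ π(τ(a₂)) = ∅. Then for every index set I with at least two elements, if the direct sum ⨁_{i∈I} A of copies of A is Krylov transitive, then ⨁_{i∈I} A is fully transitive. -/

import Mathlib

/-- `n` divides `x` in the group `G`. -/
def Divides {G : Type*} [AddCommGroup G] (n : ℕ) (x : G) : Prop :=
  ∃ z : G, n • z = x

/-- `χ(x) ≤ χ(y)`: every prime-power dividing `x` divides `y`. -/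
def HeightLE {G H : Type*} [AddCommGroup G] [AddCommGroup H] (x : G) (y : H) : Prop :=
  ∀ p k : ℕ, p.Prime → Divides (p ^ k) x → Divides (p ^ k) y

/-- `χ(x) = χ(y)`. -/
def HeightEq {G H : Type*} [AddCommGroup G] [AddCommGroup H] (x : G) (y : H) : Prop :=
  HeightLE x y ∧ HeightLE y x

def FullyTransitive (G : Type*) [AddCommGroup G] : Prop :=
  ∀ x y : G, HeightLE x y → ∃ φ : G →+ G, φ x = y

def KrylovTransitive (G : Type*) [AddCommGroup G] : Prop :=
  ∀ x y : G, HeightEq x y → ∃ φ : G →+ G, φ x = y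

def TransitiveGrp (G : Type*) [AddCommGroup G] : Prop :=
  ∀ x y : G, HeightEq x y → ∃ φ : G ≃+ G, φ x = y

def WeaklyTransitive (G : Type*) [AddCommGroup G] : Prop :=
  ∀ (x y : G) (φ ψ : G →+ G), φ x = y → ψ y = x → ∃ η : G ≃+ G, η x = y

def IsTorsionFreeGrp (G : Type*) [AddCommGroup G] : Prop :=
  ∀ (n : ℤ) (x : G), n ≠ 0 → n • x = 0 → x = 0

/-- `τ(x) ≤ τ(y)`. -/
def TypeLE {G H : Type*} [AddCommGroup G] [AddCommGroup H] (x : G) (y : H) : Prop :=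
  ∃ n : ℤ, n ≠ 0 ∧ HeightLE x (n • y)

/-- `τ(x) = τ(y)`. -/
def TypeEq {G H : Type*} [AddCommGroup G] [AddCommGroup H] (x : G) (y : H) : Prop :=
  TypeLE x y ∧ TypeLE y x

def Homogeneous (G : Type*) [AddCommGroup G] : Prop :=
  ∀ x y : G, x ≠ 0 → y ≠ 0 → TypeEq x y

/-- `π(G)`: primes `p` with `pG ≠ G`. -/
def piSet (G : Type*) [AddCommGroup G] : Set ℕ :=
  {p | p.Prime ∧ ¬ ∀ x : G, ∃ z : G, p • z = x}

/-- π(τ(a)): primes at which the height of a is finite. -/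
def piType {A : Type*} [AddCommGroup A] (a : A) : Set ℕ :=
  {p | p.Prime ∧ ∃ k : ℕ, ¬ Divides (p ^ k) a}

/-!
Reaching `y` from `x` by an endomorphism means lying in the cyclic `End`-submodule generated by `x`,
so it suffices to reach `single i b` whenever `χ(x) ≤ χ(b)`. Comparability of types yields `c ∈ A`
with `χ(c) ≥ χ(x)`, with equality at almost all primes. If `c + D • b` has the same property, then
for a suitable `t ∈ A`, correcting the finitely many exceptional primes, both
`single i (c + D • b) + single j t` and `single i c + single j t` have characteristic `χ(x)`;
Krylov transitivity reaches both, hence their difference `D • single i b`. At a prime where `c` has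
the height of `x`, the height of `c + D • b` jumps above it for at most one residue of `D`, and
comparability of the types of the `c + D • b` then shows that one of any three values of `D` works.
The reachable `D` form a subgroup of `ℤ` meeting every three-element set, which is all of `ℤ`.
-/

open Filter

section Height

variable {G H : Type*} [AddCommGroup G] [AddCommGroup H]

lemma divides_zero (n : ℕ) : Divides n (0 : G) := ⟨0, smul_zero n⟩

lemma Divides.add {n : ℕ} {x y : G} (hx : Divides n x) (hy : Divides n y) :
    Divides n (x + y) := by
  obtain ⟨z, rfl⟩ := hx
  obtain ⟨w, rfl⟩ := hy
  exact ⟨z + w, smul_add n z w⟩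

lemma Divides.neg {n : ℕ} {x : G} (hx : Divides n x) : Divides n (-x) := by
  obtain ⟨z, rfl⟩ := hx
  exact ⟨-z, smul_neg n z⟩

lemma Divides.zsmul {n : ℕ} {x : G} (hx : Divides n x) (m : ℤ) : Divides n (m • x) := by
  obtain ⟨z, rfl⟩ := hx
  exact ⟨m • z, smul_comm n m z⟩

lemma Divides.of_dvd {m n : ℕ} {x : G} (hmn : m ∣ n) (hx : Divides n x) : Divides m x := by
  obtain ⟨k, rfl⟩ := hmn
  obtain ⟨z, rfl⟩ := hx
  exact ⟨k • z, (mul_smul m k z).symm⟩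

lemma divides_zsmul_of_dvd {d : ℕ} {n : ℤ} (h : (d : ℤ) ∣ n) (a : G) : Divides d (n • a) := by
  obtain ⟨k, rfl⟩ := h
  exact ⟨k • a, by rw [← natCast_zsmul, mul_smul]⟩

noncomputable def pHeight (p : ℕ) (x : G) : ℕ∞ :=
  ⨆ (k : ℕ) (_ : Divides (p ^ k) x), (k : ℕ∞)

lemma natCast_le_pHeight_iff {p k : ℕ} {x : G} : (k : ℕ∞) ≤ pHeight p x ↔ Divides (p ^ k) x := by
  refine ⟨fun hk => ?_, fun hx => le_iSup₂_of_le k hx le_rfl⟩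
  by_contra hx
  obtain _ | k := k
  · exact hx ⟨x, by simp⟩
  have : pHeight p x ≤ k := iSup₂_le fun j hj => by
    by_contra hjk
    exact hx (hj.of_dvd (pow_dvd_pow p (by exact_mod_cast not_le.1 hjk)))
  exact absurd (Nat.cast_le.1 (hk.trans this)) (by omega)

lemma pHeight_le_pHeight_iff {p : ℕ} {x : G} {y : H} :
    pHeight p x ≤ pHeight p y ↔ ∀ k, Divides (p ^ k) x → Divides (p ^ k) y := by
  rw [← ENat.forall_natCast_le_iff_le]
  simp only [natCast_le_pHeight_iff]

lemma heightLE_iff {x : G} {y : H} : HeightLE x y ↔ ∀ p, p.Prime → pHeight p x ≤ pHeight p y := by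
  simp only [HeightLE, pHeight_le_pHeight_iff]
  exact forall_congr' fun p => ⟨fun h hp k => h k hp, fun h k hp => h hp k⟩

lemma heightEq_iff {x : G} {y : H} : HeightEq x y ↔ ∀ p, p.Prime → pHeight p x = pHeight p y := by
  simp only [HeightEq, heightLE_iff, le_antisymm_iff]
  exact ⟨fun h p hp => ⟨h.1 p hp, h.2 p hp⟩,
    fun h => ⟨fun p hp => (h p hp).1, fun p hp => (h p hp).2⟩⟩

lemma HeightLE.trans {K : Type*} [AddCommGroup K] {x : G} {y : H} {z : K}
    (hxy : HeightLE x y) (hyz : HeightLE y z) : HeightLE x z :=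
  fun p k hp hx => hyz p k hp (hxy p k hp hx)

lemma pHeight_eq_top_iff {p : ℕ} {x : G} : pHeight p x = ⊤ ↔ ∀ k, Divides (p ^ k) x := by
  simp only [← natCast_le_pHeight_iff, ENat.eq_top_iff_forall_ge]

lemma pHeight_zero (p : ℕ) : pHeight p (0 : G) = ⊤ :=
  pHeight_eq_top_iff.2 fun _ => divides_zero _

lemma mem_piType_iff {p : ℕ} {a : G} : p ∈ piType a ↔ p.Prime ∧ pHeight p a ≠ ⊤ := by
  simp [piType, pHeight_eq_top_iff]

lemma pHeight_neg (p : ℕ) (x : G) : pHeight p (-x) = pHeight p x :=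
  le_antisymm (pHeight_le_pHeight_iff.2 fun _ h => by simpa using h.neg)
    (pHeight_le_pHeight_iff.2 fun _ h => h.neg)

lemma min_le_pHeight_add (p : ℕ) (x y : G) : min (pHeight p x) (pHeight p y) ≤ pHeight p (x + y) :=
  ENat.forall_natCast_le_iff_le.1 fun _ hk => natCast_le_pHeight_iff.2 <|
    (natCast_le_pHeight_iff.1 (hk.trans (min_le_left _ _))).add
      (natCast_le_pHeight_iff.1 (hk.trans (min_le_right _ _)))

lemma min_le_pHeight_sub (p : ℕ) (x y : G) :
    min (pHeight p x) (pHeight p y) ≤ pHeight p (x - y) := by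
  simpa only [sub_eq_add_neg, pHeight_neg] using min_le_pHeight_add p x (-y)

lemma pHeight_add_eq_left {p : ℕ} {x y : G} (h : pHeight p x < pHeight p y) :
    pHeight p (x + y) = pHeight p x := by
  refine le_antisymm ?_ ((min_eq_left h.le).symm.trans_le (min_le_pHeight_add p x y))
  by_contra! hlt
  have := min_le_pHeight_sub p (x + y) y
  rw [add_sub_cancel_right] at this
  exact (lt_min hlt h).not_ge this

lemma le_pHeight_sum {ι : Type*} {p : ℕ} {C : ℕ∞} (s : Finset ι) {f : ι → G}
    (h : ∀ i ∈ s, C ≤ pHeight p (f i)) : C ≤ pHeight p (∑ i ∈ s, f i) := by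
  classical
  induction s using Finset.induction_on with
  | empty => simp [pHeight_zero]
  | insert i s hi ih =>
    rw [Finset.sum_insert hi]
    exact (le_min (h i (s.mem_insert_self i))
      (ih fun j hj => h j (Finset.mem_insert_of_mem hj))).trans (min_le_pHeight_add p _ _)

lemma pHeight_le_pHeight_zsmul (p : ℕ) (n : ℤ) (x : G) : pHeight p x ≤ pHeight p (n • x) :=
  pHeight_le_pHeight_iff.2 fun _ h => h.zsmul n

lemma pHeight_zsmul_of_not_dvd {p : ℕ} (hp : p.Prime) {n : ℤ} (hn : ¬ (p : ℤ) ∣ n) (x : G) :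
    pHeight p (n • x) = pHeight p x := by
  refine le_antisymm (pHeight_le_pHeight_iff.2 fun k ⟨z, hz⟩ => ?_) (pHeight_le_pHeight_zsmul p n x)
  obtain ⟨u, v, huv⟩ : IsCoprime n ((p : ℤ) ^ k) :=
    ((Nat.prime_iff_prime_int.1 hp).coprime_iff_not_dvd.2 hn).symm.pow_right
  refine ⟨u • z + v • x, ?_⟩
  rw [← natCast_zsmul] at hz ⊢
  rw [smul_add, smul_comm _ u, hz, smul_comm _ v, smul_smul, smul_smul, ← add_smul]
  push_cast
  rw [huv, one_smul]

lemma natCast_le_pHeight_zsmul_of_dvd {p k : ℕ} {n : ℤ} (h : (p : ℤ) ^ k ∣ n) (a : G) :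
    (k : ℕ∞) ≤ pHeight p (n • a) :=
  natCast_le_pHeight_iff.2 (divides_zsmul_of_dvd (by exact_mod_cast h) a)

end Height


section Finsupp

variable {I A : Type*} [AddCommGroup A]

lemma Divides.apply {n : ℕ} {x : I →₀ A} (hx : Divides n x) (i : I) : Divides n (x i) := by
  obtain ⟨z, rfl⟩ := hx
  exact ⟨z i, (Finsupp.smul_apply n z i).symm⟩

lemma heightLE_apply (x : I →₀ A) (i : I) : HeightLE x (x i) :=
  fun _ _ _ hx => hx.apply i

lemma pHeight_le_pHeight_apply (p : ℕ) (x : I →₀ A) (i : I) : pHeight p x ≤ pHeight p (x i) :=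
  pHeight_le_pHeight_iff.2 fun _ hx => hx.apply i

lemma pHeight_single (p : ℕ) (i : I) (a : A) : pHeight p (Finsupp.single i a) = pHeight p a := by
  refine le_antisymm (by simpa using pHeight_le_pHeight_apply p (Finsupp.single i a) i) ?_
  exact pHeight_le_pHeight_iff.2 fun _ ⟨z, hz⟩ =>
    ⟨Finsupp.single i z, by rw [Finsupp.smul_single, hz]⟩

lemma pHeight_single_add_single (p : ℕ) {i j : I} (hij : i ≠ j) (a b : A) :
    pHeight p (Finsupp.single i a + Finsupp.single j b) = min (pHeight p a) (pHeight p b) := by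
  refine le_antisymm (le_min ?_ ?_) ?_
  · simpa [hij.symm] using pHeight_le_pHeight_apply p (Finsupp.single i a + Finsupp.single j b) i
  · simpa [hij] using pHeight_le_pHeight_apply p (Finsupp.single i a + Finsupp.single j b) j
  · simpa only [pHeight_single] using min_le_pHeight_add p (Finsupp.single i a) (Finsupp.single j b)

lemma pHeight_eq_inf_support (p : ℕ) (x : I →₀ A) :
    pHeight p x = x.support.inf fun i => pHeight p (x i) := by
  refine le_antisymm (Finset.le_inf fun i _ => pHeight_le_pHeight_apply p x i) ?_
  conv_rhs => rw [← x.sum_single]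
  exact le_pHeight_sum _ fun i hi => (Finset.inf_le hi).trans_eq (pHeight_single p i (x i)).symm

lemma exists_heightLE_pHeight_eq (x : I →₀ A) (q : ℕ) :
    ∃ a : A, HeightLE x a ∧ pHeight q a = pHeight q x := by
  rcases x.support.eq_empty_or_nonempty with hx | hx
  · refine ⟨0, fun _ _ _ _ => divides_zero _, ?_⟩
    rw [pHeight_zero, pHeight_eq_inf_support, hx, Finset.inf_empty]
  · obtain ⟨i, -, hi⟩ := x.support.exists_mem_eq_inf hx fun i => pHeight q (x i)
    exact ⟨x i, heightLE_apply x i, by rw [pHeight_eq_inf_support, hi]⟩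

end Finsupp

lemma exists_pHeight_eq_on_finset {A : Type*} [AddCommGroup A] {m : ℕ → ℕ∞} (F : Finset ℕ)
    (hF : ∀ q ∈ F, q.Prime)
    (h : ∀ q ∈ F, ∃ a : A, (∀ p, p.Prime → m p ≤ pHeight p a) ∧ pHeight q a = m q) :
    ∃ t : A, (∀ p, p.Prime → m p ≤ pHeight p t) ∧ ∀ q ∈ F, pHeight q t = m q := by
  classical
  choose! a ha_ge ha_eq using h
  -- `M q` is prime to `q`, and the other primes `r ∈ F` divide it more often than `m r` says
  let M : ℕ → ℤ := fun q => ∏ r ∈ F.erase q, (r : ℤ) ^ ((m r).toNat + 1)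
  have ht_ge : ∀ p, p.Prime → m p ≤ pHeight p (∑ q ∈ F, M q • a q) := fun p hp =>
    le_pHeight_sum F fun q hq => (ha_ge q hq p hp).trans (pHeight_le_pHeight_zsmul p _ _)
  refine ⟨_, ht_ge, fun q hq => ?_⟩
  have hq' := Nat.prime_iff_prime_int.1 (hF q hq)
  rcases eq_or_ne (m q) ⊤ with htop | hfin
  · exact htop ▸ top_le_iff.1 (htop ▸ ht_ge q (hF q hq))
  have hM : ¬ (q : ℤ) ∣ M q := by
    rw [Prime.dvd_finsetProd_iff hq']
    rintro ⟨r, hr, hdvd⟩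
    have hqr := Int.natCast_dvd_natCast.1 (hq'.dvd_of_dvd_pow hdvd)
    exact (Finset.mem_erase.1 hr).1
      ((Nat.prime_dvd_prime_iff_eq (hF q hq) (hF r (Finset.mem_of_mem_erase hr))).1 hqr).symm
  have hrest : m q < pHeight q (∑ r ∈ F.erase q, M r • a r) := by
    refine lt_of_lt_of_le ?_ (le_pHeight_sum _ fun r hr =>
      natCast_le_pHeight_zsmul_of_dvd (k := (m q).toNat + 1)
        (Finset.dvd_prod_of_mem (fun r : ℕ => (r : ℤ) ^ ((m r).toNat + 1))
          (Finset.mem_erase.2 ⟨(Finset.mem_erase.1 hr).1.symm, hq⟩)) _)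
    rw [Nat.cast_add, ENat.natCast_toNat hfin]
    exact ENat.lt_add_one_iff hfin |>.2 le_rfl
  rw [← Finset.add_sum_erase F _ hq, pHeight_add_eq_left, pHeight_zsmul_of_not_dvd (hF q hq) hM,
    ha_eq q hq]
  rwa [pHeight_zsmul_of_not_dvd (hF q hq) hM, ha_eq q hq]

lemma eventually_not_natCast_dvd {n : ℤ} (hn : n ≠ 0) : ∀ᶠ p : ℕ in cofinite, ¬ (p : ℤ) ∣ n := by
  refine Filter.eventually_cofinite.2 ((Nat.divisors n.natAbs).finite_toSet.subset fun p hp => ?_)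
  simp only [not_not, Int.natCast_dvd] at hp
  simpa [hn] using hp

section Comparability

variable {G H : Type*} [AddCommGroup G] [AddCommGroup H]

lemma TypeLE.eventually_pHeight_le {a : G} {b : H} (h : TypeLE a b) :
    ∀ᶠ p in cofinite, p.Prime → pHeight p a ≤ pHeight p b := by
  obtain ⟨n, hn, hle⟩ := h
  filter_upwards [eventually_not_natCast_dvd hn] with p hpn hp
  exact (heightLE_iff.1 hle p hp).trans_eq (pHeight_zsmul_of_not_dvd hp hpn b)

lemma pHeight_add_of_piType_disjoint {a b : G} (hab : piType a ∩ piType b = ∅) {p : ℕ}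
    (hp : p.Prime) : pHeight p (a + b) = min (pHeight p a) (pHeight p b) := by
  rcases lt_trichotomy (pHeight p a) (pHeight p b) with h | h | h
  · rw [pHeight_add_eq_left h, min_eq_left h.le]
  · have htop : pHeight p a = ⊤ := by
      by_contra hne
      exact Set.eq_empty_iff_forall_notMem.1 hab p
        ⟨mem_piType_iff.2 ⟨hp, hne⟩, mem_piType_iff.2 ⟨hp, h ▸ hne⟩⟩
    refine le_antisymm ?_ (min_le_pHeight_add p a b)
    rw [← h, min_self, htop]
    exact le_top
  · rw [add_comm, pHeight_add_eq_left h, min_eq_right h.le]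

lemma exists_ne_zero_pHeight_eq_min {c u : G} (hc : c ≠ 0) (hu : u ≠ 0)
    (h : TypeLE c u ∨ TypeLE u c ∨ piType c ∩ piType u = ∅) :
    ∃ c' : G, c' ≠ 0 ∧ (∀ p, p.Prime → min (pHeight p c) (pHeight p u) ≤ pHeight p c') ∧
      ∀ᶠ p in cofinite, p.Prime → pHeight p c' = min (pHeight p c) (pHeight p u) := by
  rcases h with h | h | h
  · exact ⟨c, hc, fun _ _ => min_le_left _ _,
      h.eventually_pHeight_le.mono fun p h hp => (min_eq_left (h hp)).symm⟩
  · exact ⟨u, hu, fun _ _ => min_le_right _ _,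
      h.eventually_pHeight_le.mono fun p h hp => (min_eq_right (h hp)).symm⟩
  by_cases hcu : c + u = 0
  · rw [eq_neg_of_add_eq_zero_right hcu]
    exact ⟨c, hc, fun _ _ => min_le_left _ _,
      Eventually.of_forall fun p _ => by rw [pHeight_neg, min_self]⟩
  · exact ⟨c + u, hcu, fun p hp => (pHeight_add_of_piType_disjoint h hp).ge,
      Eventually.of_forall fun p hp => pHeight_add_of_piType_disjoint h hp⟩

lemma exists_ne_zero_pHeight_eq_inf
    (hcomp : ∀ a₁ a₂ : G, a₁ ≠ 0 → a₂ ≠ 0 →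
      TypeLE a₁ a₂ ∨ TypeLE a₂ a₁ ∨ piType a₁ ∩ piType a₂ = ∅)
    {ι : Type*} (u : ι → G) {s : Finset ι} (hs : s.Nonempty) (hu : ∀ i ∈ s, u i ≠ 0) :
    ∃ c : G, c ≠ 0 ∧ (∀ p, p.Prime → s.inf (fun i => pHeight p (u i)) ≤ pHeight p c) ∧
      ∀ᶠ p in cofinite, p.Prime → pHeight p c = s.inf fun i => pHeight p (u i) := by
  induction hs using Finset.Nonempty.cons_induction with
  | singleton i => exact ⟨u i, hu i (by simp), fun _ _ => by simp, .of_forall fun _ _ => by simp⟩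
  | cons i s hi hs ih =>
    obtain ⟨c, hc, hc_ge, hc_eq⟩ := ih fun j hj => hu j (Finset.mem_cons_of_mem hj)
    have hui := hu i (Finset.mem_cons_self i s)
    obtain ⟨c', hc', hc'_ge, hc'_eq⟩ := exists_ne_zero_pHeight_eq_min hc hui (hcomp c (u i) hc hui)
    refine ⟨c', hc', fun p hp => ?_, ?_⟩
    · rw [Finset.inf_cons, inf_comm]
      exact (min_le_min_right _ (hc_ge p hp)).trans (hc'_ge p hp)
    · filter_upwards [hc_eq, hc'_eq] with p h h' hp
      rw [Finset.inf_cons, h' hp, h hp, inf_comm]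

end Comparability

def AlmostHeightEq {G H : Type*} [AddCommGroup G] [AddCommGroup H] (a : G) (x : H) : Prop :=
  ∀ᶠ p in cofinite, p.Prime → pHeight p a = pHeight p x

lemma exists_heightLE_almostHeightEq {A I : Type*} [AddCommGroup A]
    (hcomp : ∀ a₁ a₂ : A, a₁ ≠ 0 → a₂ ≠ 0 →
      TypeLE a₁ a₂ ∨ TypeLE a₂ a₁ ∨ piType a₁ ∩ piType a₂ = ∅)
    (x : I →₀ A) : ∃ c : A, HeightLE x c ∧ AlmostHeightEq c x := by
  rcases eq_or_ne x 0 with rfl | hx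
  · exact ⟨0, fun _ _ _ _ => divides_zero _, .of_forall fun p _ => by simp only [pHeight_zero]⟩
  obtain ⟨c, -, hc_ge, hc_eq⟩ := exists_ne_zero_pHeight_eq_inf hcomp (fun i => x i)
    (Finsupp.support_nonempty_iff.2 hx) fun i hi => Finsupp.mem_support_iff.1 hi
  exact ⟨c, heightLE_iff.2 fun p hp => (pHeight_eq_inf_support p x).trans_le (hc_ge p hp),
    hc_eq.mono fun p h hp => (h hp).trans (pHeight_eq_inf_support p x).symm⟩

section Jumps

variable {G A : Type*} [AddCommGroup G] [AddCommGroup A] {x : G} {c b : A}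

lemma HeightLE.add_zsmul (hc : HeightLE x c) (hb : HeightLE x b) (D : ℤ) :
    HeightLE x (c + D • b) :=
  fun p k hp hx => (hc p k hp hx).add ((hb p k hp hx).zsmul D)

lemma pHeight_eq_of_lt_pHeight_add_zsmul {p : ℕ} (hcp : pHeight p c = pHeight p x)
    (hbp : pHeight p x ≤ pHeight p b) {D : ℤ} (hj : pHeight p x < pHeight p (c + D • b)) :
    pHeight p b = pHeight p x := by
  refine le_antisymm (not_lt.1 fun hlt => hj.ne' ?_) hbp
  rw [pHeight_add_eq_left ((hcp.trans_lt hlt).trans_le (pHeight_le_pHeight_zsmul p D b)), hcp]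

lemma dvd_sub_of_lt_pHeight_add_zsmul {p : ℕ} (hp : p.Prime) (hcp : pHeight p c = pHeight p x)
    (hbp : pHeight p x ≤ pHeight p b) {D D' : ℤ} (hj : pHeight p x < pHeight p (c + D • b))
    (hj' : pHeight p x < pHeight p (c + D' • b)) : (p : ℤ) ∣ D' - D := by
  by_contra hpD
  have := min_le_pHeight_sub p (c + D' • b) (c + D • b)
  rw [show c + D' • b - (c + D • b) = (D' - D) • b by rw [sub_smul]; abel,
    pHeight_zsmul_of_not_dvd hp hpD, pHeight_eq_of_lt_pHeight_add_zsmul hcp hbp hj] at this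
  exact (lt_min hj' hj).not_ge this

/- At a prime `p` where `c` has the height of `x`, the height of `c + D • b` can exceed it only for
one residue of `D` modulo `p`. -/
lemma almostHeightEq_add_zsmul_of_eventually_lt_imp (hc : HeightLE x c) (hc' : AlmostHeightEq c x)
    (hb : HeightLE x b) {D₁ D₂ D₃ : ℤ} (h₂ : D₁ ≠ D₂) (h₃ : D₁ ≠ D₃)
    (h : ∀ᶠ p in cofinite, p.Prime → pHeight p x < pHeight p (c + D₁ • b) →
      pHeight p x < pHeight p (c + D₂ • b) ∨ pHeight p x < pHeight p (c + D₃ • b)) :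
    AlmostHeightEq (c + D₁ • b) x := by
  filter_upwards [h, hc', eventually_not_natCast_dvd (sub_ne_zero.2 h₂.symm),
    eventually_not_natCast_dvd (sub_ne_zero.2 h₃.symm)] with p hj hcp hp₂ hp₃ hp
  refine le_antisymm (not_lt.1 fun hj₁ => ?_) (heightLE_iff.1 (hc.add_zsmul hb D₁) p hp)
  have hbp := heightLE_iff.1 hb p hp
  rcases hj hp hj₁ with hj' | hj'
  · exact hp₂ (dvd_sub_of_lt_pHeight_add_zsmul hp (hcp hp) hbp hj₁ hj')
  · exact hp₃ (dvd_sub_of_lt_pHeight_add_zsmul hp (hcp hp) hbp hj₁ hj')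

lemma almostHeightEq_add_zsmul_of_eq_zero (hc : HeightLE x c) (hc' : AlmostHeightEq c x)
    (hb : HeightLE x b) {D D₀ : ℤ} (h₀ : c + D₀ • b = 0) (hD : D ≠ D₀) :
    AlmostHeightEq (c + D • b) x :=
  almostHeightEq_add_zsmul_of_eventually_lt_imp hc hc' hb hD hD <| .of_forall fun _ _ hj =>
    Or.inl (by rw [h₀, pHeight_zero]; exact hj.trans_le le_top)

lemma eventually_lt_pHeight_add_zsmul_of_comparable {D D' : ℤ}
    (h : TypeLE (c + D • b) (c + D' • b) ∨ TypeLE (c + D' • b) (c + D • b) ∨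
      piType (c + D • b) ∩ piType (c + D' • b) = ∅) :
    (∀ᶠ p in cofinite, p.Prime → pHeight p x < pHeight p (c + D • b) →
      pHeight p x < pHeight p (c + D' • b)) ∨
    (∀ᶠ p in cofinite, p.Prime → pHeight p x < pHeight p (c + D' • b) →
      pHeight p x < pHeight p (c + D • b)) ∨
    (∀ p, p.Prime → pHeight p x ≠ ⊤ →
      pHeight p x < pHeight p (c + D • b) ∨ pHeight p x < pHeight p (c + D' • b)) := by
  rcases h with h | h | h
  · exact Or.inl (h.eventually_pHeight_le.mono fun p h hp hj => hj.trans_le (h hp))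
  · exact Or.inr (Or.inl (h.eventually_pHeight_le.mono fun p h hp hj => hj.trans_le (h hp)))
  refine Or.inr (Or.inr fun p hp hx => ?_)
  by_contra! hle
  exact Set.eq_empty_iff_forall_notMem.1 h p
    ⟨mem_piType_iff.2 ⟨hp, ne_top_of_le_ne_top hx hle.1⟩,
      mem_piType_iff.2 ⟨hp, ne_top_of_le_ne_top hx hle.2⟩⟩

lemma almostHeightEq_add_zsmul_of_pairwise_ne
    (hcomp : ∀ a₁ a₂ : A, a₁ ≠ 0 → a₂ ≠ 0 →
      TypeLE a₁ a₂ ∨ TypeLE a₂ a₁ ∨ piType a₁ ∩ piType a₂ = ∅)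
    (hc : HeightLE x c) (hc' : AlmostHeightEq c x) (hb : HeightLE x b) {D₁ D₂ D₃ : ℤ}
    (h₁₂ : D₁ ≠ D₂) (h₁₃ : D₁ ≠ D₃) (h₂₃ : D₂ ≠ D₃) :
    AlmostHeightEq (c + D₁ • b) x ∨ AlmostHeightEq (c + D₂ • b) x ∨
      AlmostHeightEq (c + D₃ • b) x := by
  by_cases e₁ : c + D₁ • b = 0
  · exact Or.inr (Or.inl (almostHeightEq_add_zsmul_of_eq_zero hc hc' hb e₁ h₁₂.symm))
  by_cases e₂ : c + D₂ • b = 0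
  · exact Or.inl (almostHeightEq_add_zsmul_of_eq_zero hc hc' hb e₂ h₁₂)
  by_cases e₃ : c + D₃ • b = 0
  · exact Or.inl (almostHeightEq_add_zsmul_of_eq_zero hc hc' hb e₃ h₁₃)
  rcases eventually_lt_pHeight_add_zsmul_of_comparable (x := x) (hcomp _ _ e₂ e₃) with h | h | h
  · exact Or.inr (Or.inl (almostHeightEq_add_zsmul_of_eventually_lt_imp hc hc' hb h₂₃ h₂₃
      (h.mono fun _ h hp hj => Or.inl (h hp hj))))
  · exact Or.inr (Or.inr (almostHeightEq_add_zsmul_of_eventually_lt_imp hc hc' hb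
      h₂₃.symm h₂₃.symm (h.mono fun _ h hp hj => Or.inl (h hp hj))))
  · exact Or.inl (almostHeightEq_add_zsmul_of_eventually_lt_imp hc hc' hb h₁₂ h₁₃
      (.of_forall fun p hp hj => h p hp (ne_top_of_lt hj)))

end Jumps

lemma AddSubgroup.one_mem_of_forall_distinct (S : AddSubgroup ℤ)
    (h : ∀ a b c : ℤ, a ≠ b → a ≠ c → b ≠ c → a ∈ S ∨ b ∈ S ∨ c ∈ S) : (1 : ℤ) ∈ S := by
  by_contra h₁
  have hn₁ : (-1 : ℤ) ∉ S := fun h => h₁ (by simpa using S.neg_mem h)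
  have h₂ : (2 : ℤ) ∈ S := by
    rcases h 1 (-1) 2 (by decide) (by decide) (by decide) with h | h | h <;> tauto
  have h₃ : (3 : ℤ) ∈ S := by
    rcases h 1 (-1) 3 (by decide) (by decide) (by decide) with h | h | h <;> tauto
  exact h₁ (by simpa using S.sub_mem h₃ h₂)

lemma KrylovTransitive.mem_span_singleton {G : Type*} [AddCommGroup G] (h : KrylovTransitive G)
    {x y : G} (hxy : HeightEq x y) : y ∈ AddMonoid.End G ∙ x :=
  Submodule.mem_span_singleton.2 (h x y hxy)

section DirectSum

variable {I A : Type*} [AddCommGroup A]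

lemma single_sub_mem_span_of_almostHeightEq (h : KrylovTransitive (I →₀ A)) {i j : I} (hij : i ≠ j)
    {x : I →₀ A} {s₁ s₂ : A} (hs₁ : HeightLE x s₁) (hs₁' : AlmostHeightEq s₁ x)
    (hs₂ : HeightLE x s₂) (hs₂' : AlmostHeightEq s₂ x) :
    Finsupp.single i (s₁ - s₂) ∈ AddMonoid.End (I →₀ A) ∙ x := by
  have hF : {p | ¬ (p.Prime → pHeight p s₁ = pHeight p x ∧ pHeight p s₂ = pHeight p x)}.Finite :=
    Filter.eventually_cofinite.1 ((hs₁'.and hs₂').mono fun p h hp => ⟨h.1 hp, h.2 hp⟩)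
  obtain ⟨t, ht_ge, ht_eq⟩ := exists_pHeight_eq_on_finset (A := A) (m := fun p => pHeight p x)
    hF.toFinset (fun q hq => by by_contra hq'; simp [hq'] at hq) fun q _ => by
      obtain ⟨a, ha, ha'⟩ := exists_heightLE_pHeight_eq x q
      exact ⟨a, heightLE_iff.1 ha, ha'⟩
  -- `single i r + single j t` has exactly the heights of `x`: `t` takes care of the finitely many
  -- primes where `r` might not
  have key : ∀ r : A, HeightLE x r →
      (∀ p, p.Prime → p ∉ hF.toFinset → pHeight p r = pHeight p x) →
      Finsupp.single i r + Finsupp.single j t ∈ AddMonoid.End (I →₀ A) ∙ x :=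
    fun r hr hr' => h.mem_span_singleton <| heightEq_iff.2 fun p hp => by
      rw [pHeight_single_add_single p hij]
      by_cases hpF : p ∈ hF.toFinset
      · rw [ht_eq p hpF, min_eq_right (heightLE_iff.1 hr p hp)]
      · rw [hr' p hp hpF, min_eq_left (ht_ge p hp)]
  have := Submodule.sub_mem _ (key s₁ hs₁ fun p hp hpF => ?_) (key s₂ hs₂ fun p hp hpF => ?_)
  · rwa [add_sub_add_right_eq_sub, ← Finsupp.single_sub] at this
  all_goals simp only [Set.Finite.mem_toFinset, Set.mem_ofPred_eq, not_not] at hpF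
  exacts [(hpF hp).1, (hpF hp).2]

lemma single_mem_span_of_heightLE
    (hcomp : ∀ a₁ a₂ : A, a₁ ≠ 0 → a₂ ≠ 0 →
      TypeLE a₁ a₂ ∨ TypeLE a₂ a₁ ∨ piType a₁ ∩ piType a₂ = ∅)
    [Nontrivial I] (h : KrylovTransitive (I →₀ A)) (x : I →₀ A) (i : I) {b : A}
    (hb : HeightLE x b) : Finsupp.single i b ∈ AddMonoid.End (I →₀ A) ∙ x := by
  obtain ⟨j, hji⟩ := exists_ne i
  obtain ⟨c, hc, hc'⟩ := exists_heightLE_almostHeightEq hcomp x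
  let S := (AddMonoid.End (I →₀ A) ∙ x).toAddSubgroup.comap (zmultiplesHom _ (Finsupp.single i b))
  have hS : ∀ D : ℤ, AlmostHeightEq (c + D • b) x → D ∈ S := fun D hD => by
    simpa [S, Finsupp.smul_single] using
      single_sub_mem_span_of_almostHeightEq h hji.symm (hc.add_zsmul hb D) hD hc hc'
  simpa [S] using S.one_mem_of_forall_distinct fun D₁ D₂ D₃ h₁₂ h₁₃ h₂₃ =>
    (almostHeightEq_add_zsmul_of_pairwise_ne hcomp hc hc' hb h₁₂ h₁₃ h₂₃).imp (hS D₁)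
      (Or.imp (hS D₂) (hS D₃))

end DirectSum

theorem stmt_12_general (A : Type*) [AddCommGroup A]
    (hcomp : ∀ a₁ a₂ : A, a₁ ≠ 0 → a₂ ≠ 0 →
      TypeLE a₁ a₂ ∨ TypeLE a₂ a₁ ∨ piType a₁ ∩ piType a₂ = ∅)
    (I : Type*) [Nontrivial I]
    (h : KrylovTransitive (I →₀ A)) : FullyTransitive (I →₀ A) := by
  intro x y hxy
  have hy : y ∈ AddMonoid.End (I →₀ A) ∙ x := by
    rw [← y.sum_single]
    exact Submodule.finsuppSum_mem _ _ _ _ fun i _ =>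
      single_mem_span_of_heightLE hcomp h x i (hxy.trans (heightLE_apply y i))
  exact Submodule.mem_span_singleton.1 hy

theorem stmt_12 (A : Type*) [AddCommGroup A] (hTF : IsTorsionFreeGrp A)
    (hcomp : ∀ a₁ a₂ : A, a₁ ≠ 0 → a₂ ≠ 0 →
      TypeLE a₁ a₂ ∨ TypeLE a₂ a₁ ∨ piType a₁ ∩ piType a₂ = ∅)
    (I : Type*) [Nontrivial I]
    (h : KrylovTransitive (I →₀ A)) : FullyTransitive (I →₀ A) :=
  stmt_12_general A hcomp I h
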